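/- Under the assumptions of the existence lemma for J⁺_t (with 0 < t ≤ T = 2π/k, k > 2γ_q, γ_q = 2/(2-q), 1 ≤ q < 2, λ₊ > 0), the non-negative minimizer φ₊(·,t) of J⁺_t over H¹₀(0,t) is unique, and satisfies φ₊(·,t) > 0 on (0,t). -/

import Mathlib

/-!
Hidden convexity. Along `(φ, ψ) ↦ rms φ ψ = √((φ² + ψ²)/2)` the integrand of `J⁺` is convex:
the gradient term by Cauchy–Schwarz, the `φ²` term is linear in `φ²`, and `-|φ|^q = -(φ²)^(q/2)`
is strictly convex in `φ²` because `q < 2`. Hence two different nonnegative minimizers `φ, ψ`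
would give `J⁺(rms φ ψ) < (J⁺ φ + J⁺ ψ)/2 = min J⁺`, provided `rms φ ψ` is admissible.

Admissibility (`C¹` up to the boundary) needs `φ > 0` inside and nonzero slopes of `φ` at the
endpoints. Testing minimality with `φ + sη`, `η ≥ 0`, `s ↓ 0` gives `∫ φ'η' ≥ γ² ∫ φη ≥ 0`,
so `φ'` is antitone and `φ` is concave; `φ ≢ 0` since `J⁺(cχ) ~ -c^q < 0` for small `c`; and a
nonnegative concave function vanishing at `0` and `t` and positive somewhere is positive inside,
with slope `> 0` at `0` and `< 0` at `t`.
-/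

open Set MeasureTheory

/-- Admissible class: `C¹` functions on `[0,t]` vanishing at the endpoints
(a classical realization of `H¹₀(0,t)` for this smooth variational problem). -/
def Adm (t : ℝ) : Set (ℝ → ℝ) :=
  {φ : ℝ → ℝ | ContDiffOn ℝ 1 φ (Icc 0 t) ∧ φ 0 = 0 ∧ φ t = 0}

/-- The one-phase functional
`J⁺_t(φ) = ∫₀^t ((1/2)(φ')² - (γ_q²/2)φ² - (λ₊/q)|φ|^q)`. -/
noncomputable def Jplus (γq lp q t : ℝ) (φ : ℝ → ℝ) : ℝ :=
  ∫ x in Ioo (0 : ℝ) t,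
    ((1 / 2) * (deriv φ x) ^ 2 - (γq ^ 2 / 2) * (φ x) ^ 2 - (lp / q) * |φ x| ^ q)

open Filter Topology

section Calculus

variable {a b : ℝ} {f g : ℝ → ℝ}

theorem eqOn_deriv_derivWithin_Icc :
    EqOn (deriv f) (derivWithin f (Icc a b)) (Ioo a b) := fun _ hx =>
  (derivWithin_of_mem_nhds (Icc_mem_nhds hx.1 hx.2)).symm

theorem ContDiffOn.differentiableOn_Ioo (hf : ContDiffOn ℝ 1 f (Icc a b)) :
    DifferentiableOn ℝ f (Ioo a b) :=
  (hf.differentiableOn one_ne_zero).mono Ioo_subset_Icc_self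

theorem ContDiffOn.differentiableAt_of_mem_Ioo (hf : ContDiffOn ℝ 1 f (Icc a b)) {x : ℝ}
    (hx : x ∈ Ioo a b) : DifferentiableAt ℝ f x :=
  hf.differentiableOn_Ioo.differentiableAt (Ioo_mem_nhds hx.1 hx.2)

theorem ContDiffOn.continuousOn_deriv_Ioo (hf : ContDiffOn ℝ 1 f (Icc a b)) :
    ContinuousOn (deriv f) (Ioo a b) :=
  ((hf.mono Ioo_subset_Icc_self).continuousOn_deriv_of_isOpen isOpen_Ioo le_rfl)

theorem ContDiffOn.integrableOn_Ioo_comp (hf : ContDiffOn ℝ 1 f (Icc a b))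
    (hg : ContDiffOn ℝ 1 g (Icc a b)) {F : ℝ → ℝ → ℝ → ℝ → ℝ}
    (hF : Continuous fun p : ℝ × ℝ × ℝ × ℝ => F p.1 p.2.1 p.2.2.1 p.2.2.2) :
    IntegrableOn (fun x => F (deriv f x) (f x) (deriv g x) (g x)) (Ioo a b) := by
  rcases le_or_gt b a with hba | hab
  · simp [Ioo_eq_empty_of_le hba]
  have hcont : ContinuousOn (fun x => F (derivWithin f (Icc a b) x) (f x)
      (derivWithin g (Icc a b) x) (g x)) (Icc a b) :=
    hF.comp_continuousOn <|
      (hf.continuousOn_derivWithin (uniqueDiffOn_Icc hab) le_rfl).prodMk <|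
        hf.continuousOn.prodMk <|
          (hg.continuousOn_derivWithin (uniqueDiffOn_Icc hab) le_rfl).prodMk hg.continuousOn
  refine (hcont.integrableOn_Icc.mono_set Ioo_subset_Icc_self).congr_fun (fun x hx => ?_)
    measurableSet_Ioo
  rw [eqOn_deriv_derivWithin_Icc hx, eqOn_deriv_derivWithin_Icc hx]

theorem ContDiffOn.tendsto_deriv_nhdsGT (hab : a < b) (hf : ContDiffOn ℝ 1 f (Icc a b)) :
    Tendsto (deriv f) (𝓝[>] a) (𝓝 (derivWithin f (Icc a b) a)) := by
  rw [← nhdsWithin_Ioo_eq_nhdsGT hab]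
  refine Tendsto.congr' (eventually_nhdsWithin_of_forall fun x hx =>
    (eqOn_deriv_derivWithin_Icc hx).symm) ?_
  exact ((hf.continuousOn_derivWithin (uniqueDiffOn_Icc hab) le_rfl) a
    (left_mem_Icc.2 hab.le)).mono Ioo_subset_Icc_self

theorem ContDiffOn.tendsto_deriv_nhdsLT (hab : a < b) (hf : ContDiffOn ℝ 1 f (Icc a b)) :
    Tendsto (deriv f) (𝓝[<] b) (𝓝 (derivWithin f (Icc a b) b)) := by
  rw [← nhdsWithin_Ioo_eq_nhdsLT hab]
  refine Tendsto.congr' (eventually_nhdsWithin_of_forall fun x hx =>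
    (eqOn_deriv_derivWithin_Icc hx).symm) ?_
  exact ((hf.continuousOn_derivWithin (uniqueDiffOn_Icc hab) le_rfl) b
    (right_mem_Icc.2 hab.le)).mono Ioo_subset_Icc_self

theorem ContDiffOn.tendsto_slope_nhdsGT (hab : a < b) (hf : ContDiffOn ℝ 1 f (Icc a b)) :
    Tendsto (slope f a) (𝓝[>] a) (𝓝 (derivWithin f (Icc a b) a)) := by
  have h := ((hf.differentiableOn one_ne_zero) a (left_mem_Icc.2 hab.le)).hasDerivWithinAt
  rw [← nhdsWithin_Ioo_eq_nhdsGT hab, ← hasDerivWithinAt_iff_tendsto_slope' (by simp)]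
  exact h.mono Ioo_subset_Icc_self

theorem ContDiffOn.tendsto_slope_nhdsLT (hab : a < b) (hf : ContDiffOn ℝ 1 f (Icc a b)) :
    Tendsto (slope f b) (𝓝[<] b) (𝓝 (derivWithin f (Icc a b) b)) := by
  have h := ((hf.differentiableOn one_ne_zero) b (right_mem_Icc.2 hab.le)).hasDerivWithinAt
  rw [← nhdsWithin_Ioo_eq_nhdsLT hab, ← hasDerivWithinAt_iff_tendsto_slope' (by simp)]
  exact h.mono Ioo_subset_Icc_self

theorem contDiffOn_Icc_of_tendsto_deriv {A B : ℝ} (hab : a < b) (hf : ContinuousOn f (Icc a b))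
    (hd : DifferentiableOn ℝ f (Ioo a b)) (hd' : ContinuousOn (deriv f) (Ioo a b))
    (hA : Tendsto (deriv f) (𝓝[>] a) (𝓝 A)) (hB : Tendsto (deriv f) (𝓝[<] b) (𝓝 B)) :
    ContDiffOn ℝ 1 f (Icc a b) := by
  have hfa : HasDerivWithinAt f A (Icc a b) a :=
    (hasDerivWithinAt_Ici_of_tendsto_deriv hd
      ((hf a (left_mem_Icc.2 hab.le)).mono Ioo_subset_Icc_self) (Ioo_mem_nhdsGT hab) hA).mono
      Icc_subset_Ici_self
  have hfb : HasDerivWithinAt f B (Icc a b) b :=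
    (hasDerivWithinAt_Iic_of_tendsto_deriv hd
      ((hf b (right_mem_Icc.2 hab.le)).mono Ioo_subset_Icc_self) (Ioo_mem_nhdsLT hab) hB).mono
      Icc_subset_Iic_self
  have hIoo : ∀ x ∈ Ioo a b, derivWithin f (Icc a b) x = deriv f x := fun x hx =>
    (eqOn_deriv_derivWithin_Icc hx).symm
  have hIoo' : ∀ x ∈ Ioo a b, derivWithin f (Icc a b) =ᶠ[𝓝 x] deriv f := fun x hx =>
    eventually_of_mem (Ioo_mem_nhds hx.1 hx.2) hIoo
  rw [contDiffOn_one_iff_derivWithin (uniqueDiffOn_Icc hab)]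
  constructor
  · intro x hx
    rcases eq_endpoints_or_mem_Ioo_of_mem_Icc hx with rfl | rfl | hx
    exacts [hfa.differentiableWithinAt, hfb.differentiableWithinAt,
      (hd.differentiableAt (Ioo_mem_nhds hx.1 hx.2)).differentiableWithinAt]
  · intro x hx
    rcases eq_endpoints_or_mem_Ioo_of_mem_Icc hx with rfl | rfl | hx
    · rw [continuousWithinAt_Icc_iff_Ici hab, ← continuousWithinAt_Ioi_iff_Ici,
        ContinuousWithinAt, hfa.derivWithin (uniqueDiffOn_Icc hab _ hx)]
      refine hA.congr' ?_
      filter_upwards [Ioo_mem_nhdsGT hab] with y hy using (hIoo y hy).symm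
    · rw [continuousWithinAt_Icc_iff_Iic hab, ← continuousWithinAt_Iio_iff_Iic,
        ContinuousWithinAt, hfb.derivWithin (uniqueDiffOn_Icc hab _ hx)]
      refine hB.congr' ?_
      filter_upwards [Ioo_mem_nhdsLT hab] with y hy using (hIoo y hy).symm
    · exact ((hd'.continuousAt (Ioo_mem_nhds hx.1 hx.2)).congr
        (hIoo' x hx).symm).continuousWithinAt

end Calculus

section SetIntegral

variable {X : Type*} [MeasurableSpace X] {μ : Measure X} {s : Set X} {f : X → ℝ}

theorem abs_setIntegral_mul_sub_le {w : X → ℝ} {c δ : ℝ} (hs : MeasurableSet s)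
    (hfw : IntegrableOn (fun x => f x * w x) s μ) (hw : IntegrableOn w s μ)
    (hw0 : ∀ x ∈ s, 0 ≤ w x) (hw1 : ∫ x in s, w x ∂μ = 1)
    (hf : ∀ x ∈ s, w x ≠ 0 → |f x - c| ≤ δ) :
    |∫ x in s, f x * w x ∂μ - c| ≤ δ := by
  have hsub : ∫ x in s, f x * w x ∂μ - c = ∫ x in s, (f x - c) * w x ∂μ := by
    simp only [sub_mul]
    rw [integral_sub hfw (hw.const_mul c), integral_const_mul, hw1, mul_one]
  rw [hsub]
  calc |∫ x in s, (f x - c) * w x ∂μ| ≤ ∫ x in s, δ * w x ∂μ := by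
        refine norm_integral_le_of_norm_le (G := ℝ) (hw.const_mul δ) ((ae_restrict_iff' hs).2
          (Eventually.of_forall fun x hx => ?_))
        rw [Real.norm_eq_abs, abs_mul, abs_of_nonneg (hw0 x hx)]
        rcases eq_or_ne (w x) 0 with h | h
        · simp [h]
        · exact mul_le_mul_of_nonneg_right (hf x hx h) (hw0 x hx)
    _ = δ := by rw [integral_const_mul, hw1, mul_one]

theorem setIntegral_pos_of_pos_on_isOpen [TopologicalSpace X] [OpensMeasurableSpace X]
    [μ.IsOpenPosMeasure] {U : Set X} (hs : MeasurableSet s) (hf : IntegrableOn f s μ)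
    (hf0 : ∀ x ∈ s, 0 ≤ f x) (hU : IsOpen U) (hUne : U.Nonempty) (hUs : U ⊆ s)
    (hfU : ∀ x ∈ U, 0 < f x) :
    0 < ∫ x in s, f x ∂μ := by
  rw [setIntegral_pos_iff_support_of_nonneg_ae ((ae_restrict_iff' hs).2 (ae_of_all _ hf0)) hf]
  exact (hU.measure_pos μ hUne).trans_le
    (measure_mono fun x hx => ⟨(hfU x hx).ne', hUs hx⟩)

end SetIntegral

section RootMeanSquare

noncomputable def rms (a b : ℝ) : ℝ := √((a ^ 2 + b ^ 2) / 2)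

theorem rms_nonneg (a b : ℝ) : 0 ≤ rms a b := Real.sqrt_nonneg _

theorem sq_rms (a b : ℝ) : rms a b ^ 2 = (a ^ 2 + b ^ 2) / 2 :=
  Real.sq_sqrt (by positivity)

theorem rms_pos_of_ne_zero_left {a : ℝ} (b : ℝ) (ha : a ≠ 0) : 0 < rms a b :=
  Real.sqrt_pos.2 (by positivity)

theorem rms_zero_zero : rms 0 0 = 0 := by simp [rms]

theorem rms_div {m : ℝ} (hm : 0 < m) (a b : ℝ) : rms (a / m) (b / m) = rms a b / m := by
  have h : ((a / m) ^ 2 + (b / m) ^ 2) / 2 = ((a ^ 2 + b ^ 2) / 2) / m ^ 2 := by field_simp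
  rw [rms, rms, h, Real.sqrt_div' _ (sq_nonneg m), Real.sqrt_sq hm.le]

theorem Continuous.rms : Continuous fun p : ℝ × ℝ => rms p.1 p.2 := by
  unfold _root_.rms; fun_prop

theorem HasDerivAt.rms {f g : ℝ → ℝ} {f' g' x : ℝ} (hf : HasDerivAt f f' x)
    (hg : HasDerivAt g g' x) (hx : rms (f x) (g x) ≠ 0) :
    HasDerivAt (fun y => _root_.rms (f y) (g y))
      ((f x * f' + g x * g') / (2 * _root_.rms (f x) (g x))) x := by
  have hsq : (f x ^ 2 + g x ^ 2) / 2 ≠ 0 := fun h => hx (by simp [_root_.rms, h])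
  have h := (((hf.fun_pow 2).fun_add (hg.fun_pow 2)).div_const 2).sqrt hsq
  simp only [_root_.rms] at hx ⊢
  convert h using 1
  field_simp
  ring

theorem tendsto_rms_deriv {l : Filter ℝ} {m u w U W : ℝ → ℝ} {a b A B : ℝ}
    (hm : ∀ᶠ y in l, 0 < m y) (hu : Tendsto (fun y => u y / m y) l (𝓝 a))
    (hw : Tendsto (fun y => w y / m y) l (𝓝 b)) (hU : Tendsto U l (𝓝 A))
    (hW : Tendsto W l (𝓝 B)) (hab : rms a b ≠ 0) :
    Tendsto (fun y => (u y * U y + w y * W y) / (2 * rms (u y) (w y))) l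
      (𝓝 ((a * A + b * B) / (2 * rms a b))) := by
  have hlim := ((hu.mul hU).add (hw.mul hW)).div
    (((Continuous.rms.tendsto _).comp (hu.prodMk_nhds hw)).const_mul 2) (by positivity)
  refine hlim.congr' ?_
  filter_upwards [hm] with y hy
  simp only [Pi.div_apply, Function.comp_apply, rms_div hy]
  field_simp

theorem abs_rpow_eq_sq_rpow_half (a q : ℝ) : |a| ^ q = (a ^ 2) ^ (q / 2) := by
  rw [← sq_abs, ← Real.rpow_natCast, ← Real.rpow_mul (abs_nonneg a)]
  norm_num [mul_div_cancel₀]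

theorem rms_rpow_eq (a b q : ℝ) : rms a b ^ q = ((a ^ 2 + b ^ 2) / 2) ^ (q / 2) := by
  rw [rms, Real.sqrt_eq_rpow, ← Real.rpow_mul (by positivity)]
  ring_nf

theorem half_add_abs_rpow_le_rms_rpow {q : ℝ} (hq : 0 ≤ q) (hq2 : q ≤ 2) (a b : ℝ) :
    (|a| ^ q + |b| ^ q) / 2 ≤ rms a b ^ q := by
  have h := (Real.concaveOn_rpow (p := q / 2) (by linarith) (by linarith)).2
    (mem_Ici.2 (sq_nonneg a)) (mem_Ici.2 (sq_nonneg b)) (by norm_num : (0 : ℝ) ≤ 1 / 2)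
    (by norm_num : (0 : ℝ) ≤ 1 / 2) (by norm_num)
  rw [abs_rpow_eq_sq_rpow_half, abs_rpow_eq_sq_rpow_half, rms_rpow_eq]
  simp only [smul_eq_mul, one_div_mul_eq_div, ← add_div] at h
  linarith

theorem half_add_abs_rpow_lt_rms_rpow {q : ℝ} (hq : 0 < q) (hq2 : q < 2) {a b : ℝ}
    (hab : |a| ≠ |b|) : (|a| ^ q + |b| ^ q) / 2 < rms a b ^ q := by
  have h := (Real.strictConcaveOn_rpow (p := q / 2) (by positivity) (by linarith)).2
    (mem_Ici.2 (sq_nonneg a)) (mem_Ici.2 (sq_nonneg b))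
    (fun h => hab (sq_eq_sq_iff_abs_eq_abs a b |>.1 h)) (by norm_num : (0 : ℝ) < 1 / 2)
    (by norm_num : (0 : ℝ) < 1 / 2) (by norm_num)
  rw [abs_rpow_eq_sq_rpow_half, abs_rpow_eq_sq_rpow_half, rms_rpow_eq]
  simp only [smul_eq_mul, one_div_mul_eq_div, ← add_div] at h
  linarith

end RootMeanSquare

section Lagrangian

variable {γ lp q : ℝ}

noncomputable def lagrangian (γ lp q p u : ℝ) : ℝ :=
  1 / 2 * p ^ 2 - γ ^ 2 / 2 * u ^ 2 - lp / q * |u| ^ q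

theorem Jplus_eq_integral_lagrangian (t : ℝ) (φ : ℝ → ℝ) :
    Jplus γ lp q t φ = ∫ x in Ioo 0 t, lagrangian γ lp q (deriv φ x) (φ x) :=
  rfl

theorem continuous_lagrangian (hq : 0 ≤ q) :
    Continuous fun p : ℝ × ℝ => lagrangian γ lp q p.1 p.2 := by
  unfold lagrangian
  have : Continuous fun p : ℝ × ℝ => |p.2| ^ q :=
    (continuous_abs.comp continuous_snd).rpow_const fun _ => Or.inr hq
  fun_prop

theorem lagrangian_add_mul_le (hq : 0 ≤ q) (hlp : 0 ≤ lp) {p P u U s : ℝ} (hu : 0 ≤ u)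
    (hU : 0 ≤ U) (hs : 0 ≤ s) :
    lagrangian γ lp q (p + s * P) (u + s * U) ≤
      lagrangian γ lp q p u + s * (p * P - γ ^ 2 * (u * U)) + s ^ 2 * lagrangian γ 0 q P U := by
  have hpow : |u| ^ q ≤ |u + s * U| ^ q := by
    rw [abs_of_nonneg hu, abs_of_nonneg (by positivity)]
    exact Real.rpow_le_rpow hu (by nlinarith) hq
  have hterm := mul_le_mul_of_nonneg_left hpow (div_nonneg hlp hq)
  unfold lagrangian
  linear_combination hterm

theorem lagrangian_const_mul {c : ℝ} (hc : 0 ≤ c) (P U : ℝ) :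
    lagrangian γ lp q (c * P) (c * U) =
      c ^ 2 * lagrangian γ 0 q P U - c ^ q * (lp / q * |U| ^ q) := by
  rw [lagrangian, lagrangian, abs_mul, abs_of_nonneg hc, Real.mul_rpow hc (abs_nonneg U)]
  ring

theorem sq_div_two_mul_rms_le (a b A B : ℝ) :
    ((a * A + b * B) / (2 * rms a b)) ^ 2 ≤ (A ^ 2 + B ^ 2) / 2 := by
  rcases (rms_nonneg a b).eq_or_lt with h | h
  · rw [← h, mul_zero, div_zero, sq, zero_mul]
    positivity
  rw [div_pow, div_le_iff₀ (pow_pos (by linarith) 2), mul_pow, sq_rms]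
  nlinarith [sq_nonneg (a * B - b * A)]

/-- For `(a, b, A, B) = (φ, ψ, φ', ψ')` the first argument is the derivative of `rms φ ψ`. -/
theorem lagrangian_rms_le (hq : 0 ≤ q) (hq2 : q ≤ 2) (hlp : 0 ≤ lp) (a b A B : ℝ) :
    lagrangian γ lp q ((a * A + b * B) / (2 * rms a b)) (rms a b) ≤
      (lagrangian γ lp q A a + lagrangian γ lp q B b) / 2 := by
  have hpow := mul_le_mul_of_nonneg_left (half_add_abs_rpow_le_rms_rpow hq hq2 a b)
    (div_nonneg hlp hq)
  unfold lagrangian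
  rw [sq_rms, abs_of_nonneg (rms_nonneg a b)]
  linear_combination (1 / 2 : ℝ) * sq_div_two_mul_rms_le a b A B + hpow

theorem lagrangian_rms_lt (hq : 0 < q) (hq2 : q < 2) (hlp : 0 < lp) {a b : ℝ} (A B : ℝ)
    (hab : |a| ≠ |b|) :
    lagrangian γ lp q ((a * A + b * B) / (2 * rms a b)) (rms a b) <
      (lagrangian γ lp q A a + lagrangian γ lp q B b) / 2 := by
  have hpow := mul_lt_mul_of_pos_left (half_add_abs_rpow_lt_rms_rpow hq hq2 hab)
    (div_pos hlp hq)
  unfold lagrangian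
  rw [sq_rms, abs_of_nonneg (rms_nonneg a b)]
  linear_combination (1 / 2 : ℝ) * sq_div_two_mul_rms_le a b A B + hpow

end Lagrangian

section Admissible

variable {γ lp q t : ℝ} {φ η : ℝ → ℝ}

theorem add_mul_mem_Adm (hφ : φ ∈ Adm t) (hη : η ∈ Adm t) (s : ℝ) :
    (fun x => φ x + s * η x) ∈ Adm t :=
  ⟨hφ.1.add (contDiffOn_const.mul hη.1), by simp [hφ.2.1, hη.2.1], by simp [hφ.2.2, hη.2.2]⟩

theorem const_mul_mem_Adm (hη : η ∈ Adm t) (c : ℝ) : (fun x => c * η x) ∈ Adm t :=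
  ⟨contDiffOn_const.mul hη.1, by simp [hη.2.1], by simp [hη.2.2]⟩

theorem integrableOn_lagrangian (hq : 0 ≤ q) (hφ : φ ∈ Adm t) :
    IntegrableOn (fun x => lagrangian γ lp q (deriv φ x) (φ x)) (Ioo 0 t) :=
  hφ.1.integrableOn_Ioo_comp hφ.1 (F := fun p u _ _ => lagrangian γ lp q p u)
    ((continuous_lagrangian hq).comp (f := fun p : ℝ × ℝ × ℝ × ℝ => (p.1, p.2.1)) (by fun_prop))

theorem integrableOn_abs_rpow (hq : 0 ≤ q) (hφ : φ ∈ Adm t) :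
    IntegrableOn (fun x => |φ x| ^ q) (Ioo 0 t) :=
  hφ.1.integrableOn_Ioo_comp hφ.1 (F := fun _ u _ _ => |u| ^ q)
    ((by fun_prop : Continuous fun p : ℝ × ℝ × ℝ × ℝ => |p.2.1|).rpow_const fun _ => Or.inr hq)

theorem Jplus_const_mul (hq : 0 ≤ q) (hχ : χ ∈ Adm t) {c : ℝ} (hc : 0 ≤ c) :
    Jplus γ lp q t (fun x => c * χ x) =
      c ^ 2 * Jplus γ 0 q t χ - c ^ q * (lp / q * ∫ x in Ioo 0 t, |χ x| ^ q) := by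
  simp only [Jplus_eq_integral_lagrangian, deriv_const_mul_field', lagrangian_const_mul hc]
  rw [integral_sub ((integrableOn_lagrangian hq hχ).const_mul _)
    (((integrableOn_abs_rpow hq hχ).const_mul _).const_mul _), integral_const_mul,
    integral_const_mul, integral_const_mul]

theorem Jplus_add_mul_le (hq : 0 ≤ q) (hlp : 0 ≤ lp) (hφ : φ ∈ Adm t) (hη : η ∈ Adm t)
    (hφ0 : ∀ x ∈ Icc 0 t, 0 ≤ φ x) (hη0 : ∀ x ∈ Icc 0 t, 0 ≤ η x) {s : ℝ} (hs : 0 ≤ s) :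
    Jplus γ lp q t (fun x => φ x + s * η x) ≤
      Jplus γ lp q t φ + s * (∫ x in Ioo 0 t, (deriv φ x * deriv η x - γ ^ 2 * (φ x * η x))) +
        s ^ 2 * Jplus γ 0 q t η := by
  have hderiv : ∀ x ∈ Ioo 0 t, deriv (fun x => φ x + s * η x) x = deriv φ x + s * deriv η x :=
    fun x hx => ((hφ.1.differentiableAt_of_mem_Ioo hx).hasDerivAt.add
      ((hη.1.differentiableAt_of_mem_Ioo hx).hasDerivAt.const_mul s)).deriv
  have hA : IntegrableOn (fun x => deriv φ x * deriv η x - γ ^ 2 * (φ x * η x)) (Ioo 0 t) :=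
    hφ.1.integrableOn_Ioo_comp hη.1 (F := fun p u P U => p * P - γ ^ 2 * (u * U)) (by fun_prop)
  have hφL := integrableOn_lagrangian (γ := γ) (lp := lp) hq hφ
  have hηL := integrableOn_lagrangian (γ := γ) (lp := 0) hq hη
  have hsum := (hφL.fun_add (hA.const_mul s)).fun_add (hηL.const_mul (s ^ 2))
  calc Jplus γ lp q t (fun x => φ x + s * η x)
      ≤ ∫ x in Ioo 0 t, (lagrangian γ lp q (deriv φ x) (φ x) +
          s * (deriv φ x * deriv η x - γ ^ 2 * (φ x * η x)) +
          s ^ 2 * lagrangian γ 0 q (deriv η x) (η x)) := by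
        refine setIntegral_mono_on (integrableOn_lagrangian hq (add_mul_mem_Adm hφ hη s)) hsum
          measurableSet_Ioo fun x hx => ?_
        rw [hderiv x hx]
        exact lagrangian_add_mul_le hq hlp (hφ0 x (Ioo_subset_Icc_self hx))
          (hη0 x (Ioo_subset_Icc_self hx)) hs
    _ = _ := by
        rw [integral_add (hφL.fun_add (hA.const_mul s)) (hηL.const_mul _), integral_add hφL
          (hA.const_mul s), integral_const_mul, integral_const_mul]
        rfl

theorem integral_deriv_mul_sub_nonneg_of_isMinOn (hq : 0 ≤ q) (hlp : 0 ≤ lp) (hφ : φ ∈ Adm t)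
    (hφ0 : ∀ x ∈ Icc 0 t, 0 ≤ φ x) (hmin : IsMinOn (Jplus γ lp q t) (Adm t) φ)
    (hη : η ∈ Adm t) (hη0 : ∀ x ∈ Icc 0 t, 0 ≤ η x) :
    0 ≤ ∫ x in Ioo 0 t, (deriv φ x * deriv η x - γ ^ 2 * (φ x * η x)) := by
  set A := ∫ x in Ioo 0 t, (deriv φ x * deriv η x - γ ^ 2 * (φ x * η x)) with hA
  set B := Jplus γ 0 q t η
  have hpos : ∀ s ∈ Ioi (0 : ℝ), 0 ≤ A + s * B := fun s hs => by
    have := (hmin (add_mul_mem_Adm hφ hη s)).trans (Jplus_add_mul_le hq hlp hφ hη hφ0 hη0 hs.le)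
    rw [← hA] at this
    exact (mul_nonneg_iff_of_pos_left hs).1 (by linear_combination this)
  have hlim : Tendsto (fun s => A + s * B) (𝓝[>] 0) (𝓝 A) :=
    (Continuous.tendsto' (f := fun s : ℝ => A + s * B) (by fun_prop) 0 A (by simp)).mono_left
      nhdsWithin_le_nhds
  exact ge_of_tendsto hlim (eventually_nhdsWithin_of_forall hpos)

end Admissible

section SmoothStep

noncomputable def smoothStep (α ε x : ℝ) : ℝ := Real.smoothTransition ((x - α) / ε)

variable {α ε : ℝ}

theorem contDiff_smoothStep : ContDiff ℝ 1 (smoothStep α ε) :=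
  Real.smoothTransition.contDiff.comp (by fun_prop)

theorem smoothStep_of_le (hε : 0 < ε) {x : ℝ} (hx : x ≤ α) : smoothStep α ε x = 0 :=
  Real.smoothTransition.zero_of_nonpos (div_nonpos_of_nonpos_of_nonneg (by linarith) hε.le)

theorem smoothStep_of_ge (hε : 0 < ε) {x : ℝ} (hx : α + ε ≤ x) : smoothStep α ε x = 1 :=
  Real.smoothTransition.one_of_one_le ((one_le_div hε).2 (by linarith))

theorem smoothStep_le_smoothStep (hε : 0 ≤ ε) {β : ℝ} (hαβ : α ≤ β) (x : ℝ) :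
    smoothStep β ε x ≤ smoothStep α ε x :=
  Real.smoothTransition.monotone (div_le_div_of_nonneg_right (by linarith) hε)

theorem deriv_smoothStep_nonneg (hε : 0 ≤ ε) (x : ℝ) : 0 ≤ deriv (smoothStep α ε) x :=
  Monotone.deriv_nonneg fun _ _ hxy =>
    Real.smoothTransition.monotone (div_le_div_of_nonneg_right (by linarith) hε)

theorem deriv_smoothStep_eq_zero (hε : 0 < ε) {x : ℝ} (hx : x ∉ Icc α (α + ε)) :
    deriv (smoothStep α ε) x = 0 := by
  simp only [mem_Icc, not_and_or, not_le] at hx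
  rcases hx with hx | hx
  · have : smoothStep α ε =ᶠ[𝓝 x] fun _ => 0 :=
      eventually_of_mem (Iio_mem_nhds hx) fun y hy => smoothStep_of_le hε (le_of_lt hy)
    rw [this.deriv_eq, deriv_const]
  · have : smoothStep α ε =ᶠ[𝓝 x] fun _ => 1 :=
      eventually_of_mem (Ioi_mem_nhds hx) fun y hy => smoothStep_of_ge hε (le_of_lt hy)
    rw [this.deriv_eq, deriv_const]

theorem continuous_deriv_smoothStep : Continuous (deriv (smoothStep α ε)) :=
  contDiff_smoothStep.continuous_deriv le_rfl

theorem setIntegral_deriv_smoothStep {a b : ℝ} (hε : 0 < ε) (ha : a ≤ α) (hb : α + ε ≤ b) :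
    ∫ x in Ioo a b, deriv (smoothStep α ε) x = 1 := by
  rw [← integral_Ioc_eq_integral_Ioo, ← intervalIntegral.integral_of_le (by linarith),
    intervalIntegral.integral_deriv_eq_sub
      (fun x _ => (contDiff_smoothStep.differentiable one_ne_zero).differentiableAt)
      (continuous_deriv_smoothStep.intervalIntegrable _ _),
    smoothStep_of_ge hε hb, smoothStep_of_le hε ha, sub_zero]

theorem tendsto_setIntegral_mul_deriv_smoothStep {f : ℝ → ℝ} {a b α : ℝ} (hα : α ∈ Ioo a b)
    (hf : IntegrableOn f (Ioo a b)) (hfc : ContinuousAt f α) :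
    Tendsto (fun ε => ∫ x in Ioo a b, f x * deriv (smoothStep α ε) x) (𝓝[>] 0) (𝓝 (f α)) := by
  rw [Metric.tendsto_nhds]
  intro δ hδ
  obtain ⟨ρ, hρ, hfρ⟩ := Metric.continuousAt_iff.1 hfc (δ / 2) (half_pos hδ)
  filter_upwards [Ioo_mem_nhdsGT (lt_min hρ (sub_pos.2 hα.2))] with ε hε
  have hεb : α + ε ≤ b := by linarith [min_le_right ρ (b - α), hε.2]
  have hw : ContinuousOn (deriv (smoothStep α ε)) (Icc a b) :=
    continuous_deriv_smoothStep.continuousOn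
  refine lt_of_le_of_lt (abs_setIntegral_mul_sub_le measurableSet_Ioo
    (hf.mul_continuousOn_of_subset hw measurableSet_Ioo isCompact_Icc Ioo_subset_Icc_self)
    (hw.integrableOn_Icc.mono_set Ioo_subset_Icc_self)
    (fun x _ => deriv_smoothStep_nonneg hε.1.le x)
    (setIntegral_deriv_smoothStep hε.1 hα.1.le hεb) fun x _ hx => ?_) (half_lt_self hδ)
  have hmem : x ∈ Icc α (α + ε) := by_contra fun h => hx (deriv_smoothStep_eq_zero hε.1 h)
  have : dist x α < ρ := by
    rw [Real.dist_eq, abs_lt]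
    constructor <;> linarith [hmem.1, hmem.2, min_le_left ρ (b - α), hε.2]
  exact (Real.dist_eq _ _ ▸ hfρ this).le

end SmoothStep

section Concavity

variable {a b : ℝ} {φ : ℝ → ℝ}

theorem ConcaveOn.pos_of_nonneg (hc : ConcaveOn ℝ (Icc a b) φ)
    (hd : DifferentiableOn ℝ φ (Ioo a b)) (h0 : ∀ x ∈ Icc a b, 0 ≤ φ x) {x₀ : ℝ}
    (hx₀ : x₀ ∈ Icc a b) (hpos : 0 < φ x₀) : ∀ x ∈ Ioo a b, 0 < φ x := by
  intro x hx
  by_contra! hle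
  have hx0 : φ x = 0 := le_antisymm hle (h0 x (Ioo_subset_Icc_self hx))
  have hdx : DifferentiableAt ℝ φ x := hd.differentiableAt (Ioo_mem_nhds hx.1 hx.2)
  have hmin : IsLocalMin φ x :=
    eventually_of_mem (Icc_mem_nhds hx.1 hx.2) fun y hy => hx0 ▸ h0 y hy
  rcases lt_trichotomy x x₀ with hlt | rfl | hgt
  · have := hc.slope_le_deriv (Ioo_subset_Icc_self hx) hx₀ hlt hdx
    rw [hmin.deriv_eq_zero, slope_def_field, hx0, sub_zero] at this
    exact (div_pos hpos (sub_pos.2 hlt)).not_ge this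
  · exact hpos.ne' hx0
  · have := hc.deriv_le_slope hx₀ (Ioo_subset_Icc_self hx) hgt hdx
    rw [hmin.deriv_eq_zero, slope_def_field, hx0, zero_sub] at this
    exact (div_neg_of_neg_of_pos (neg_neg_of_pos hpos) (sub_pos.2 hgt)).not_ge this

theorem ConcaveOn.derivWithin_left_pos (hc : ConcaveOn ℝ (Icc a b) φ)
    (hd : DifferentiableWithinAt ℝ φ (Icc a b) a) {y : ℝ} (hy : y ∈ Ioc a b) (hlt : φ a < φ y) :
    0 < derivWithin φ (Icc a b) a := by
  have := hc.slope_le_derivWithin (left_mem_Icc.2 (hy.1.le.trans hy.2)) (Ioc_subset_Icc_self hy)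
    hy.1 hd
  rw [slope_def_field] at this
  exact (div_pos (sub_pos.2 hlt) (sub_pos.2 hy.1)).trans_le this

theorem ConcaveOn.derivWithin_right_neg (hc : ConcaveOn ℝ (Icc a b) φ)
    (hd : DifferentiableWithinAt ℝ φ (Icc a b) b) {y : ℝ} (hy : y ∈ Ico a b) (hlt : φ b < φ y) :
    derivWithin φ (Icc a b) b < 0 := by
  have := hc.derivWithin_le_slope (Ico_subset_Icc_self hy) (right_mem_Icc.2 (hy.1.trans hy.2.le))
    hy.2 hd
  rw [slope_def_field] at this
  exact this.trans_lt (div_neg_of_neg_of_pos (sub_neg.2 hlt) (sub_pos.2 hy.2))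

variable {γ lp q t : ℝ}

theorem antitoneOn_deriv_of_setIntegral_deriv_mul_nonneg (hφ : ContDiffOn ℝ 1 φ (Icc 0 t))
    (h : ∀ η ∈ Adm t, (∀ x ∈ Icc 0 t, 0 ≤ η x) → 0 ≤ ∫ x in Ioo 0 t, deriv φ x * deriv η x) :
    AntitoneOn (deriv φ) (Ioo 0 t) := by
  intro x₁ hx₁ x₂ hx₂ hle
  have hφ' : IntegrableOn (deriv φ) (Ioo 0 t) :=
    hφ.integrableOn_Ioo_comp hφ (F := fun p _ _ _ => p) (by fun_prop)
  have hlim : ∀ x ∈ Ioo 0 t, Tendsto (fun ε => ∫ y in Ioo 0 t, deriv φ y *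
      deriv (smoothStep x ε) y) (𝓝[>] 0) (𝓝 (deriv φ x)) := fun x hx =>
    tendsto_setIntegral_mul_deriv_smoothStep hx hφ'
      (hφ.continuousOn_deriv_Ioo.continuousAt (Ioo_mem_nhds hx.1 hx.2))
  refine le_of_tendsto_of_tendsto (hlim x₂ hx₂) (hlim x₁ hx₁) ?_
  filter_upwards [Ioo_mem_nhdsGT (sub_pos.2 hx₂.2)] with ε hε
  have hw : ∀ x, IntegrableOn (fun y => deriv φ y * deriv (smoothStep x ε) y) (Ioo 0 t) :=
    fun x => hφ.integrableOn_Ioo_comp contDiff_smoothStep.contDiffOn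
      (F := fun p _ P _ => p * P) (by fun_prop)
  have hη : (fun y => smoothStep x₁ ε y - smoothStep x₂ ε y) ∈ Adm t :=
    ⟨contDiff_smoothStep.contDiffOn.sub contDiff_smoothStep.contDiffOn,
      by simp [smoothStep_of_le hε.1 hx₁.1.le, smoothStep_of_le hε.1 hx₂.1.le],
      by simp [smoothStep_of_ge hε.1 (by linarith [hε.2] : x₁ + ε ≤ t),
        smoothStep_of_ge hε.1 (by linarith [hε.2] : x₂ + ε ≤ t)]⟩
  have hderiv : deriv (fun y => smoothStep x₁ ε y - smoothStep x₂ ε y) =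
      fun y => deriv (smoothStep x₁ ε) y - deriv (smoothStep x₂ ε) y := by
    ext y
    exact deriv_sub ((contDiff_smoothStep.differentiable one_ne_zero).differentiableAt)
      ((contDiff_smoothStep.differentiable one_ne_zero).differentiableAt)
  have := h _ hη fun y _ => sub_nonneg.2 (smoothStep_le_smoothStep hε.1.le hle y)
  simp only [hderiv, mul_sub] at this
  rwa [integral_sub (hw x₁) (hw x₂), sub_nonneg] at this

theorem concaveOn_of_isMinOn (hq : 0 ≤ q) (hlp : 0 ≤ lp) (hφ : φ ∈ Adm t)
    (hφ0 : ∀ x ∈ Icc 0 t, 0 ≤ φ x) (hmin : IsMinOn (Jplus γ lp q t) (Adm t) φ) :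
    ConcaveOn ℝ (Icc 0 t) φ := by
  refine AntitoneOn.concaveOn_of_deriv (convex_Icc 0 t) hφ.1.continuousOn
    (interior_Icc (a := (0 : ℝ)) ▸ hφ.1.differentiableOn_Ioo) ?_
  rw [interior_Icc]
  refine antitoneOn_deriv_of_setIntegral_deriv_mul_nonneg hφ.1 fun η hη hη0 => ?_
  have hvar := integral_deriv_mul_sub_nonneg_of_isMinOn hq hlp hφ hφ0 hmin hη hη0
  have hφη : 0 ≤ ∫ x in Ioo 0 t, φ x * η x := setIntegral_nonneg measurableSet_Ioo
    fun x hx => mul_nonneg (hφ0 x (Ioo_subset_Icc_self hx)) (hη0 x (Ioo_subset_Icc_self hx))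
  rw [integral_sub (hφ.1.integrableOn_Ioo_comp hη.1 (F := fun p _ P _ => p * P) (by fun_prop))
    ((hφ.1.integrableOn_Ioo_comp hη.1 (F := fun _ u _ U => u * U) (by fun_prop)).const_mul _),
    integral_const_mul] at hvar
  nlinarith [sq_nonneg γ]

end Concavity

section Minimizers

variable {γ lp q t : ℝ} {φ : ℝ → ℝ}

theorem exists_Jplus_neg (hq : 0 < q) (hq2 : q < 2) (hlp : 0 < lp) (ht : 0 < t) :
    ∃ χ ∈ Adm t, Jplus γ lp q t χ < 0 := by
  set χ : ℝ → ℝ := fun x => x * (t - x)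
  have hχ : χ ∈ Adm t := ⟨(by fun_prop : ContDiff ℝ 1 χ).contDiffOn, by simp [χ], by simp [χ]⟩
  have hP : 0 < lp / q * ∫ x in Ioo 0 t, |χ x| ^ q := by
    refine mul_pos (div_pos hlp hq) (setIntegral_pos_of_pos_on_isOpen measurableSet_Ioo
      (integrableOn_abs_rpow hq.le hχ) (fun x _ => by positivity) isOpen_Ioo (nonempty_Ioo.2 ht)
      subset_rfl fun x hx => ?_)
    exact Real.rpow_pos_of_pos (abs_pos.2 (mul_pos hx.1 (sub_pos.2 hx.2)).ne') q
  set K := lp / q * ∫ x in Ioo 0 t, |χ x| ^ q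
  have hlim : Tendsto (fun c : ℝ => c ^ (2 - q) * Jplus γ 0 q t χ - K) (𝓝[>] 0)
      (𝓝 (0 ^ (2 - q) * Jplus γ 0 q t χ - K)) :=
    (((Real.continuousAt_rpow_const 0 (2 - q) (Or.inr (by linarith))).tendsto.mono_left
      nhdsWithin_le_nhds).mul_const _).sub_const _
  rw [Real.zero_rpow (by linarith), zero_mul, zero_sub] at hlim
  obtain ⟨c, hcneg, hc⟩ := ((hlim.eventually (gt_mem_nhds (neg_neg_of_pos hP))).and
    self_mem_nhdsWithin).exists
  refine ⟨fun x => c * χ x, const_mul_mem_Adm hχ c, ?_⟩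
  have hc2 : c ^ 2 = c ^ q * c ^ (2 - q) := by
    rw [← Real.rpow_add hc, add_sub_cancel, ← Real.rpow_natCast]; norm_num
  rw [Jplus_const_mul hq.le hχ hc.le, hc2]
  nlinarith [Real.rpow_pos_of_pos hc q]

theorem exists_pos_of_isMinOn (hq : 0 < q) (hq2 : q < 2) (hlp : 0 < lp) (ht : 0 < t)
    (hφ0 : ∀ x ∈ Icc 0 t, 0 ≤ φ x) (hmin : IsMinOn (Jplus γ lp q t) (Adm t) φ) :
    ∃ x ∈ Ioo 0 t, 0 < φ x := by
  by_contra! hφ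
  have hzero : ∀ x ∈ Ioo 0 t, φ =ᶠ[𝓝 x] fun _ => 0 := fun x hx =>
    eventually_of_mem (Ioo_mem_nhds hx.1 hx.2) fun y hy =>
      le_antisymm (hφ y hy) (hφ0 y (Ioo_subset_Icc_self hy))
  have hJ : Jplus γ lp q t φ = 0 := by
    rw [Jplus_eq_integral_lagrangian]
    refine (setIntegral_congr_fun measurableSet_Ioo fun x hx => ?_).trans (integral_zero _ _)
    rw [(hzero x hx).deriv_eq, (hzero x hx).eq_of_nhds]
    simp [lagrangian, Real.zero_rpow hq.ne']
  obtain ⟨χ, hχ, hneg⟩ := exists_Jplus_neg (γ := γ) hq hq2 hlp ht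
  linarith [isMinOn_iff.1 hmin χ hχ]

theorem pos_and_boundary_slopes_of_isMinOn (hq : 0 < q) (hq2 : q < 2) (hlp : 0 < lp) (ht : 0 < t)
    (hφ : φ ∈ Adm t) (hφ0 : ∀ x ∈ Icc 0 t, 0 ≤ φ x) (hmin : IsMinOn (Jplus γ lp q t) (Adm t) φ) :
    (∀ x ∈ Ioo 0 t, 0 < φ x) ∧ 0 < derivWithin φ (Icc 0 t) 0 ∧
      derivWithin φ (Icc 0 t) t < 0 := by
  have hc := concaveOn_of_isMinOn hq.le hlp.le hφ hφ0 hmin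
  obtain ⟨x₀, hx₀, hφx₀⟩ := exists_pos_of_isMinOn hq hq2 hlp ht hφ0 hmin
  have hpos := hc.pos_of_nonneg hφ.1.differentiableOn_Ioo hφ0 (Ioo_subset_Icc_self hx₀) hφx₀
  have hmid : t / 2 ∈ Ioo 0 t := ⟨by linarith, by linarith⟩
  refine ⟨hpos, hc.derivWithin_left_pos ?_ (Ioo_subset_Ioc_self hmid) ?_,
    hc.derivWithin_right_neg ?_ (Ioo_subset_Ico_self hmid) ?_⟩
  · exact hφ.1.differentiableOn one_ne_zero 0 (left_mem_Icc.2 ht.le)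
  · rw [hφ.2.1]; exact hpos _ hmid
  · exact hφ.1.differentiableOn one_ne_zero t (right_mem_Icc.2 ht.le)
  · rw [hφ.2.2]; exact hpos _ hmid

end Minimizers

section HiddenConvexity

variable {γ lp q t : ℝ} {φ ψ : ℝ → ℝ}

theorem tendsto_div_nhdsGT_of_mem_Adm (ht : 0 < t) (hφ : φ ∈ Adm t) :
    Tendsto (fun y => φ y / y) (𝓝[>] 0) (𝓝 (derivWithin φ (Icc 0 t) 0)) :=
  (hφ.1.tendsto_slope_nhdsGT ht).congr fun y => by simp [slope_def_field, hφ.2.1]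

theorem tendsto_div_nhdsLT_of_mem_Adm (ht : 0 < t) (hφ : φ ∈ Adm t) :
    Tendsto (fun y => φ y / (t - y)) (𝓝[<] t) (𝓝 (-derivWithin φ (Icc 0 t) t)) :=
  (hφ.1.tendsto_slope_nhdsLT ht).neg.congr fun y => by
    rw [slope_def_field, hφ.2.2, sub_zero, ← div_neg, neg_sub]

theorem hasDerivAt_rms_of_mem_Adm (hφ : φ ∈ Adm t) (hψ : ψ ∈ Adm t) {x : ℝ} (hx : x ∈ Ioo 0 t)
    (hφx : φ x ≠ 0) :
    HasDerivAt (fun y => rms (φ y) (ψ y))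
      ((φ x * deriv φ x + ψ x * deriv ψ x) / (2 * rms (φ x) (ψ x))) x :=
  (hφ.1.differentiableAt_of_mem_Ioo hx).hasDerivAt.rms
    (hψ.1.differentiableAt_of_mem_Ioo hx).hasDerivAt
    (rms_pos_of_ne_zero_left _ hφx).ne'

/-- The nonzero boundary slopes of `φ` keep `rms φ ψ / y` and `rms φ ψ / (t - y)` away from `0`,
which makes `(φ φ' + ψ ψ') / (2 rms φ ψ)` converge at the endpoints. -/
theorem rms_mem_Adm (ht : 0 < t) (hφ : φ ∈ Adm t) (hψ : ψ ∈ Adm t)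
    (hpos : ∀ x ∈ Ioo 0 t, 0 < φ x) (hφ0 : derivWithin φ (Icc 0 t) 0 ≠ 0)
    (hφt : derivWithin φ (Icc 0 t) t ≠ 0) : (fun x => rms (φ x) (ψ x)) ∈ Adm t := by
  set D : ℝ → ℝ := fun x => (φ x * deriv φ x + ψ x * deriv ψ x) / (2 * rms (φ x) (ψ x))
  have hD : ∀ x ∈ Ioo 0 t, HasDerivAt (fun y => rms (φ y) (ψ y)) (D x) x := fun x hx =>
    hasDerivAt_rms_of_mem_Adm hφ hψ hx (hpos x hx).ne'
  have hDeq : ∀ x ∈ Ioo 0 t, D x = deriv (fun y => rms (φ y) (ψ y)) x := fun x hx =>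
    (hD x hx).deriv.symm
  refine ⟨?_, by simp [hφ.2.1, hψ.2.1, rms_zero_zero], by simp [hφ.2.2, hψ.2.2, rms_zero_zero]⟩
  apply contDiffOn_Icc_of_tendsto_deriv ht
    (Continuous.rms.comp_continuousOn (hφ.1.continuousOn.prodMk hψ.1.continuousOn))
    (fun x hx => (hD x hx).differentiableAt.differentiableWithinAt)
  · refine ContinuousOn.congr (ContinuousOn.div ?_ ?_ fun x hx => ?_) fun x hx => (hDeq x hx).symm
    · exact ((hφ.1.continuousOn.mono Ioo_subset_Icc_self).mul hφ.1.continuousOn_deriv_Ioo).add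
        ((hψ.1.continuousOn.mono Ioo_subset_Icc_self).mul hψ.1.continuousOn_deriv_Ioo)
    · exact continuousOn_const.mul (Continuous.rms.comp_continuousOn
        ((hφ.1.continuousOn.prodMk hψ.1.continuousOn).mono Ioo_subset_Icc_self))
    · exact mul_ne_zero two_ne_zero (rms_pos_of_ne_zero_left _ (hpos x hx).ne').ne'
  · refine Tendsto.congr' (eventually_of_mem (Ioo_mem_nhdsGT ht) hDeq)
      (tendsto_rms_deriv (m := fun y => y) self_mem_nhdsWithin
        (tendsto_div_nhdsGT_of_mem_Adm ht hφ) (tendsto_div_nhdsGT_of_mem_Adm ht hψ)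
        (hφ.1.tendsto_deriv_nhdsGT ht) (hψ.1.tendsto_deriv_nhdsGT ht)
        (rms_pos_of_ne_zero_left _ hφ0).ne')
  · refine Tendsto.congr' (eventually_of_mem (Ioo_mem_nhdsLT ht) hDeq)
      (tendsto_rms_deriv (m := fun y => t - y)
        (eventually_nhdsWithin_of_forall fun y hy => sub_pos.2 hy)
        (tendsto_div_nhdsLT_of_mem_Adm ht hφ) (tendsto_div_nhdsLT_of_mem_Adm ht hψ)
        (hφ.1.tendsto_deriv_nhdsLT ht) (hψ.1.tendsto_deriv_nhdsLT ht)
        (rms_pos_of_ne_zero_left _ (neg_ne_zero.2 hφt)).ne')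

theorem Jplus_rms_lt (hq : 0 < q) (hq2 : q < 2) (hlp : 0 < lp) (hφ : φ ∈ Adm t)
    (hψ : ψ ∈ Adm t) (hv : (fun x => rms (φ x) (ψ x)) ∈ Adm t)
    (hφpos : ∀ x ∈ Ioo 0 t, 0 < φ x) (hψpos : ∀ x ∈ Ioo 0 t, 0 < ψ x)
    (hne : ∃ x ∈ Ioo 0 t, φ x ≠ ψ x) :
    Jplus γ lp q t (fun x => rms (φ x) (ψ x)) < (Jplus γ lp q t φ + Jplus γ lp q t ψ) / 2 := by
  have hφL := integrableOn_lagrangian (γ := γ) (lp := lp) hq.le hφ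
  have hψL := integrableOn_lagrangian (γ := γ) (lp := lp) hq.le hψ
  have hvL := integrableOn_lagrangian (γ := γ) (lp := lp) hq.le hv
  have hderiv : ∀ x ∈ Ioo 0 t, deriv (fun y => rms (φ y) (ψ y)) x =
      (φ x * deriv φ x + ψ x * deriv ψ x) / (2 * rms (φ x) (ψ x)) := fun x hx =>
    (hasDerivAt_rms_of_mem_Adm hφ hψ hx (hφpos x hx).ne').deriv
  have hU : IsOpen (Ioo 0 t ∩ (fun x => φ x - ψ x) ⁻¹' {0}ᶜ) :=
    ((hφ.1.continuousOn.sub hψ.1.continuousOn).mono Ioo_subset_Icc_self).isOpen_inter_preimage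
      isOpen_Ioo isOpen_compl_singleton
  obtain ⟨x₀, hx₀, hne₀⟩ := hne
  have hgap := setIntegral_pos_of_pos_on_isOpen measurableSet_Ioo
    (IntegrableOn.fun_sub ((hφL.fun_add hψL).div_const 2) hvL) (fun x hx => ?_) hU
    ⟨x₀, hx₀, sub_ne_zero.2 hne₀⟩ inter_subset_left (fun x hx => ?_)
  · rw [integral_sub ((hφL.fun_add hψL).div_const 2) hvL, integral_div,
      integral_add hφL hψL] at hgap
    simp only [Jplus_eq_integral_lagrangian]
    linarith
  · rw [sub_nonneg, hderiv x hx]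
    exact lagrangian_rms_le hq.le hq2.le hlp.le _ _ _ _
  · rw [sub_pos, hderiv x hx.1]
    refine lagrangian_rms_lt hq hq2 hlp _ _ ?_
    rw [abs_of_pos (hφpos x hx.1), abs_of_pos (hψpos x hx.1)]
    exact sub_ne_zero.1 hx.2

end HiddenConvexity

theorem Jplus_nonneg_minimizer_unique (q lp t : ℝ)
    (hq1 : 1 ≤ q) (hq2 : q < 2) (hlp : 0 < lp)
    (ht : 0 < t) :
    ∀ φ ∈ Adm t, ∀ ψ ∈ Adm t,
      (∀ x ∈ Icc (0 : ℝ) t, 0 ≤ φ x) → (∀ x ∈ Icc (0 : ℝ) t, 0 ≤ ψ x) →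
      (∀ χ ∈ Adm t, Jplus (2 / (2 - q)) lp q t φ ≤ Jplus (2 / (2 - q)) lp q t χ) →
      (∀ χ ∈ Adm t, Jplus (2 / (2 - q)) lp q t ψ ≤ Jplus (2 / (2 - q)) lp q t χ) →
      (∀ x ∈ Icc (0 : ℝ) t, φ x = ψ x) ∧ (∀ x ∈ Ioo (0 : ℝ) t, 0 < φ x) := by
  intro φ hφ ψ hψ hφ0 hψ0 hminφ hminψ
  have hq : 0 < q := by linarith
  obtain ⟨hφpos, hφl, hφr⟩ :=
    pos_and_boundary_slopes_of_isMinOn hq hq2 hlp ht hφ hφ0 (isMinOn_iff.2 hminφ)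
  obtain ⟨hψpos, -, -⟩ :=
    pos_and_boundary_slopes_of_isMinOn hq hq2 hlp ht hψ hψ0 (isMinOn_iff.2 hminψ)
  refine ⟨fun x hx => ?_, hφpos⟩
  by_contra hne
  have hx' : x ∈ Ioo 0 t := by
    rcases eq_endpoints_or_mem_Ioo_of_mem_Icc hx with rfl | rfl | hx'
    · exact absurd (hφ.2.1.trans hψ.2.1.symm) hne
    · exact absurd (hφ.2.2.trans hψ.2.2.symm) hne
    · exact hx'
  have hv := rms_mem_Adm ht hφ hψ hφpos hφl.ne' hφr.ne
  have hlt := Jplus_rms_lt (γ := 2 / (2 - q)) hq hq2 hlp hφ hψ hv hφpos hψpos ⟨x, hx', hne⟩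
  linarith [hminφ _ hv, hminφ ψ hψ, hminψ φ hφ]
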